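/- Under Assumptions (A1)–(A2), for every ε > 0, α ∈ ℝ and Δt > 0, the function w(x) := exp(Δt U^{ε,α}(x)) (which equals the action of the discretized Feynman–Kac operator P̂^U_{Δt} on the constant function 1) satisfies the following discrete Lyapunov condition: there exist γ ∈ (0,1), K ≥ 1 and R > 0 such that w(x) ≤ γ for all x with |x| > R and w(x) ≤ K for all x ∈ ℝ^d; equivalently, w(x) ≤ γ + K·1_{\{|x| ≤ R\}}(x) pointwise on ℝ^d. -/

import Mathlib

open Filter MeasureTheory
open scoped RealInnerProductSpace

noncomputable section

/-- The Laplacian of `V : ℝ^d → ℝ` at `x`: the trace of the Hessian,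
computed as the sum of the second directional derivatives along the
standard orthonormal basis. -/
def laplacian {d : ℕ} (V : EuclideanSpace ℝ (Fin d) → ℝ) (x : EuclideanSpace ℝ (Fin d)) : ℝ :=
  ∑ i, fderiv ℝ (fderiv ℝ V) x (EuclideanSpace.single i 1) (EuclideanSpace.single i 1)

/-- The divergence `∇·b` of a vector field `b : ℝ^d → ℝ^d` at `x`:
the trace of the Jacobian. -/
def diverg {d : ℕ} (b : EuclideanSpace ℝ (Fin d) → EuclideanSpace ℝ (Fin d))
    (x : EuclideanSpace ℝ (Fin d)) : ℝ :=
  ∑ i, fderiv ℝ b x (EuclideanSpace.single i 1) i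

/-- Assumptions (A1)–(A2) of the paper: `V` is `C^∞` with
`⟪x, H₀ ∇V(x)⟫ ≥ ‖x‖²` for large `‖x‖` (for some symmetric positive-definite `H₀`)
and `‖D²V(x)‖ = o(‖∇V(x)‖)` as `‖x‖ → ∞`; the vector field `b` is `C^∞` and bounded
in `C¹`, and `⟪b, ∇V⟫ ≤ c‖∇V‖²` for some constant `0 < c < 1/2`. -/
structure Assumptions {d : ℕ} (V : EuclideanSpace ℝ (Fin d) → ℝ)
    (b : EuclideanSpace ℝ (Fin d) → EuclideanSpace ℝ (Fin d)) : Prop where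
  smooth_V : ContDiff ℝ (⊤ : ℕ∞) V
  coercive : ∃ (H₀ : EuclideanSpace ℝ (Fin d) →L[ℝ] EuclideanSpace ℝ (Fin d)) (R₀ : ℝ),
    0 ≤ R₀ ∧ IsSelfAdjoint H₀ ∧ (∀ x : EuclideanSpace ℝ (Fin d), x ≠ 0 → 0 < ⟪x, H₀ x⟫) ∧
      ∀ x : EuclideanSpace ℝ (Fin d), R₀ ≤ ‖x‖ → ‖x‖ ^ 2 ≤ ⟪x, H₀ (gradient V x)⟫
  hessian_little_o : ∀ δ > (0 : ℝ), ∃ Rδ : ℝ, ∀ x : EuclideanSpace ℝ (Fin d),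
    Rδ ≤ ‖x‖ → ‖fderiv ℝ (fderiv ℝ V) x‖ ≤ δ * ‖gradient V x‖
  smooth_b : ContDiff ℝ (⊤ : ℕ∞) b
  bounded_b : ∃ B : ℝ, ∀ x : EuclideanSpace ℝ (Fin d), ‖b x‖ + ‖fderiv ℝ b x‖ ≤ B
  b_grad_V : ∃ c : ℝ, 0 < c ∧ c < 1 / 2 ∧
    ∀ x : EuclideanSpace ℝ (Fin d), ⟪b x, gradient V x⟫ ≤ c * ‖gradient V x‖ ^ 2

/-- The potential `U^{ε,α}` appearing in the Feynman–Kac semigroup: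
`U^{ε,α} = −‖∇V‖²/(4ε) + ⟪b, ∇V⟫/(2ε) − α(1−α)‖b‖²/ε + ΔV/2 − α ∇·b`. -/
def Upot {d : ℕ} (V : EuclideanSpace ℝ (Fin d) → ℝ)
    (b : EuclideanSpace ℝ (Fin d) → EuclideanSpace ℝ (Fin d)) (ε α : ℝ)
    (x : EuclideanSpace ℝ (Fin d)) : ℝ :=
  -(1 / (4 * ε)) * ‖gradient V x‖ ^ 2 + (1 / (2 * ε)) * ⟪b x, gradient V x⟫
    - (α * (1 - α) / ε) * ‖b x‖ ^ 2 + (1 / 2) * laplacian V x - α * diverg b x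

lemma coord_le_norm' {d : ℕ} (v : EuclideanSpace ℝ (Fin d)) (i : Fin d) : |v i| ≤ ‖v‖ := by
  have h : ‖v i‖^2 ≤ ∑ j, ‖v j‖^2 :=
    Finset.single_le_sum (fun j _ => sq_nonneg ‖v j‖) (Finset.mem_univ i)
  calc |v i| = Real.sqrt (‖v i‖^2) := by
        rw [Real.sqrt_sq (norm_nonneg _)]; exact (Real.norm_eq_abs _).symm
    _ ≤ Real.sqrt (∑ j, ‖v j‖^2) := Real.sqrt_le_sqrt h
    _ = ‖v‖ := (EuclideanSpace.norm_eq v).symm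

lemma upot_cont' {d : ℕ} (V : EuclideanSpace ℝ (Fin d) → ℝ)
    (b : EuclideanSpace ℝ (Fin d) → EuclideanSpace ℝ (Fin d))
    (hV : ContDiff ℝ (⊤ : ℕ∞) V) (hb : ContDiff ℝ (⊤ : ℕ∞) b) (ε α : ℝ) :
    Continuous (Upot V b ε α) := by
  have hg : Continuous (gradient V) :=
    (InnerProductSpace.toDual ℝ _).symm.continuous.comp (hV.continuous_fderiv (by simp))
  have hlap : Continuous (laplacian V) := by
    have hfd2 : Continuous (fderiv ℝ (fderiv ℝ V)) :=
      (hV.fderiv_right (m := (⊤ : ℕ∞)) (by simp)).continuous_fderiv (by simp)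
    exact continuous_finset_sum _ fun i _ =>
      (hfd2.clm_apply continuous_const).clm_apply continuous_const
  have hdiv : Continuous (diverg b) := by
    have hbd : Continuous (fderiv ℝ b) := hb.continuous_fderiv (by simp)
    exact continuous_finset_sum _ fun i _ =>
      (EuclideanSpace.proj i).continuous.comp (hbd.clm_apply continuous_const)
  have h1 : Continuous fun x => ‖gradient V x‖ ^ 2 := hg.norm.pow 2
  have h2 : Continuous fun x => ⟪b x, gradient V x⟫ := hb.continuous.inner hg
  have h3 : Continuous fun x => ‖b x‖ ^ 2 := hb.continuous.norm.pow 2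
  exact ((((continuous_const.mul h1).add (continuous_const.mul h2)).sub
    (continuous_const.mul h3)).add (continuous_const.mul hlap)).sub
    (continuous_const.mul hdiv)

set_option maxHeartbeats 2000000 in
/-- **Discrete Lyapunov condition for the weight `w = exp(Δt U^{ε,α})`.**
Under Assumptions (A1)–(A2), for every `ε > 0`, `α ∈ ℝ` and `Δt > 0` there exist
`γ ∈ (0,1)`, `K ≥ 1` and `R > 0` such that `w(x) ≤ γ` whenever `‖x‖ > R` and
`w(x) ≤ K` everywhere; equivalently `w ≤ γ + K · 1_{‖·‖ ≤ R}` pointwise. -/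
theorem discrete_lyapunov_weight {d : ℕ} (V : EuclideanSpace ℝ (Fin d) → ℝ)
    (b : EuclideanSpace ℝ (Fin d) → EuclideanSpace ℝ (Fin d)) (hA : Assumptions V b)
    (ε α Δt : ℝ) (hε : 0 < ε) (hΔt : 0 < Δt) :
    ∃ γ : ℝ, γ ∈ Set.Ioo (0 : ℝ) 1 ∧ ∃ K ≥ (1 : ℝ), ∃ R > (0 : ℝ),
      (∀ x : EuclideanSpace ℝ (Fin d), R < ‖x‖ → Real.exp (Δt * Upot V b ε α x) ≤ γ) ∧
      (∀ x : EuclideanSpace ℝ (Fin d), Real.exp (Δt * Upot V b ε α x) ≤ K) ∧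
      (∀ x : EuclideanSpace ℝ (Fin d), Real.exp (Δt * Upot V b ε α x)
        ≤ γ + K * (Metric.closedBall (0 : EuclideanSpace ℝ (Fin d)) R).indicator
            (fun _ => (1 : ℝ)) x) := by
  obtain ⟨H₀, R₀, hR₀, -, hpos, hcoer⟩ := hA.coercive
  obtain ⟨R₁, hR₁⟩ := hA.hessian_little_o 1 one_pos
  obtain ⟨B, hB⟩ := hA.bounded_b
  obtain ⟨c, hc0, hc2, hbV⟩ := hA.b_grad_V
  have hB0 : 0 ≤ B := le_trans (by positivity) (hB 0)
  obtain ⟨a, ha_def⟩ : ∃ a : ℝ, a = (1 - 2 * c) / (4 * ε) := ⟨_, rfl⟩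
  have ha : 0 < a := by rw [ha_def]; apply div_pos <;> linarith
  obtain ⟨C, hC_def⟩ : ∃ C : ℝ, C = |α * (1 - α)| / ε * B ^ 2 + |α| * (d * B) := ⟨_, rfl⟩
  have hC : 0 ≤ C := by rw [hC_def]; positivity
  obtain ⟨T, hT_def⟩ : ∃ T : ℝ, T = max 1 ((d / 2 + C + 1 / Δt) / a) := ⟨_, rfl⟩
  have hT1 : (1 : ℝ) ≤ T := hT_def ▸ le_max_left _ _
  obtain ⟨R, hR_def⟩ : ∃ R : ℝ, R = max 1 (max R₀ (max R₁ (‖H₀‖ * T))) := ⟨_, rfl⟩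
  have hR1 : (1 : ℝ) ≤ R := hR_def ▸ le_max_left _ _
  have hRpos : (0 : ℝ) < R := lt_of_lt_of_le one_pos hR1
  -- Far-field bound: Δt * Upot ≤ -1 for ‖x‖ > R.
  have hfar : ∀ x : EuclideanSpace ℝ (Fin d), R < ‖x‖ → Δt * Upot V b ε α x ≤ -1 := by
    intro x hx
    have hx0 : 0 < ‖x‖ := lt_trans hRpos hx
    have hxne : x ≠ 0 := norm_pos_iff.mp hx0
    have hH0x : H₀ x ≠ 0 := by
      intro h
      have h2 := hpos x hxne
      rw [h, inner_zero_right] at h2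
      exact lt_irrefl _ h2
    have hH : 0 < ‖H₀‖ := by
      refine norm_pos_iff.mpr ?_
      intro h; exact hH0x (by simp [h])
    have ht0 : (0 : ℝ) ≤ ‖gradient V x‖ := norm_nonneg _
    have hxR₀ : R₀ ≤ ‖x‖ :=
      le_trans (hR_def ▸ le_trans (le_max_left _ _) (le_max_right _ _)) hx.le
    have hxR₁ : R₁ ≤ ‖x‖ :=
      le_trans (hR_def ▸ le_trans (le_trans (le_max_left _ _) (le_max_right _ _)) (le_max_right _ _)) hx.le
    have h1 : ‖x‖ ^ 2 ≤ ⟪x, H₀ (gradient V x)⟫ := hcoer x hxR₀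
    have h2 : ⟪x, H₀ (gradient V x)⟫ ≤ ‖x‖ * (‖H₀‖ * ‖gradient V x‖) := by
      calc ⟪x, H₀ (gradient V x)⟫ ≤ ‖x‖ * ‖H₀ (gradient V x)‖ := real_inner_le_norm _ _
        _ ≤ ‖x‖ * (‖H₀‖ * ‖gradient V x‖) :=
            mul_le_mul_of_nonneg_left (H₀.le_opNorm (gradient V x)) (norm_nonneg x)
    have hxle : ‖x‖ ≤ ‖H₀‖ * ‖gradient V x‖ := by nlinarith
    have hTt : T ≤ ‖gradient V x‖ := by
      have hHT : ‖H₀‖ * T ≤ ‖H₀‖ * ‖gradient V x‖ := by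
        have h3 : ‖H₀‖ * T ≤ R :=
          hR_def ▸ le_trans (le_trans (le_max_right _ _) (le_max_right _ _)) (le_max_right _ _)
        linarith
      exact le_of_mul_le_mul_left hHT hH
    have ht1 : (1 : ℝ) ≤ ‖gradient V x‖ := le_trans hT1 hTt
    -- bound on Upot
    have e1 : -(1 / (4 * ε)) * ‖gradient V x‖ ^ 2 + (1 / (2 * ε)) * ⟪b x, gradient V x⟫ ≤ -a * ‖gradient V x‖ ^ 2 := by
      have hb1 : (1 / (2 * ε)) * ⟪b x, gradient V x⟫ ≤ (1 / (2 * ε)) * (c * ‖gradient V x‖ ^ 2) :=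
        mul_le_mul_of_nonneg_left (hbV x) (by positivity)
      have heq : -(1 / (4 * ε)) * ‖gradient V x‖ ^ 2 + (1 / (2 * ε)) * (c * ‖gradient V x‖ ^ 2) = -a * ‖gradient V x‖ ^ 2 := by
        rw [ha_def]; field_simp; ring
      linarith
    have hbx : ‖b x‖ ≤ B := le_trans (le_add_of_nonneg_right (norm_nonneg _)) (hB x)
    have e2 : -((α * (1 - α) / ε) * ‖b x‖ ^ 2) ≤ |α * (1 - α)| / ε * B ^ 2 := by
      have hq : -(α * (1 - α) / ε) ≤ |α * (1 - α)| / ε := by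
        have heq : -(α * (1 - α) / ε) = -(α * (1 - α)) / ε := by ring
        rw [heq]
        gcongr (?_ : ℝ) / ε
        exact neg_le_abs _
      have hq2 : 0 ≤ |α * (1 - α)| / ε := by positivity
      have hbx2 : ‖b x‖ ^ 2 ≤ B ^ 2 := by nlinarith [norm_nonneg (b x)]
      calc -((α * (1 - α) / ε) * ‖b x‖ ^ 2) = -(α * (1 - α) / ε) * ‖b x‖ ^ 2 := by ring
        _ ≤ (|α * (1 - α)| / ε) * ‖b x‖ ^ 2 := mul_le_mul_of_nonneg_right hq (sq_nonneg _)
        _ ≤ (|α * (1 - α)| / ε) * B ^ 2 := mul_le_mul_of_nonneg_left hbx2 hq2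
    have hHess : ‖fderiv ℝ (fderiv ℝ V) x‖ ≤ ‖gradient V x‖ := by
      have := hR₁ x hxR₁; simpa using this
    have e4 : (1 / 2) * laplacian V x ≤ (d / 2) * ‖gradient V x‖ := by
      have hlap : |laplacian V x| ≤ d * ‖gradient V x‖ := by
        have hterm : ∀ i : Fin d,
            |fderiv ℝ (fderiv ℝ V) x (EuclideanSpace.single i 1) (EuclideanSpace.single i 1)| ≤ ‖gradient V x‖ := by
          intro i
          have h5 : ‖fderiv ℝ (fderiv ℝ V) x (EuclideanSpace.single i 1) (EuclideanSpace.single i 1)‖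
              ≤ ‖fderiv ℝ (fderiv ℝ V) x (EuclideanSpace.single i 1)‖ * ‖(EuclideanSpace.single i 1 : EuclideanSpace ℝ (Fin d))‖ :=
            ContinuousLinearMap.le_opNorm _ _
          have h6 : ‖fderiv ℝ (fderiv ℝ V) x (EuclideanSpace.single i 1)‖
              ≤ ‖fderiv ℝ (fderiv ℝ V) x‖ * ‖(EuclideanSpace.single i 1 : EuclideanSpace ℝ (Fin d))‖ :=
            ContinuousLinearMap.le_opNorm _ _
          have h7 : ‖(EuclideanSpace.single i (1 : ℝ) : EuclideanSpace ℝ (Fin d))‖ = 1 := by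
            rw [EuclideanSpace.norm_single]; norm_num
          rw [h7, mul_one] at h5 h6
          rw [← Real.norm_eq_abs]
          exact le_trans h5 (le_trans h6 hHess)
        calc |laplacian V x| ≤ ∑ i : Fin d, |fderiv ℝ (fderiv ℝ V) x (EuclideanSpace.single i 1) (EuclideanSpace.single i 1)| :=
              Finset.abs_sum_le_sum_abs _ _
          _ ≤ ∑ _i : Fin d, ‖gradient V x‖ := Finset.sum_le_sum fun i _ => hterm i
          _ = d * ‖gradient V x‖ := by simp [Finset.sum_const, mul_comm]
      have := abs_le.mp hlap
      linarith
    have hdb : ‖fderiv ℝ b x‖ ≤ B := le_trans (le_add_of_nonneg_left (norm_nonneg _)) (hB x)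
    have e5 : -(α * diverg b x) ≤ |α| * (d * B) := by
      have hdiv : |diverg b x| ≤ d * B := by
        have hterm : ∀ i : Fin d, |fderiv ℝ b x (EuclideanSpace.single i 1) i| ≤ B := by
          intro i
          have h5 : |fderiv ℝ b x (EuclideanSpace.single i 1) i| ≤ ‖fderiv ℝ b x (EuclideanSpace.single i 1)‖ :=
            coord_le_norm' _ i
          have h6 : ‖fderiv ℝ b x (EuclideanSpace.single i 1)‖
              ≤ ‖fderiv ℝ b x‖ * ‖(EuclideanSpace.single i 1 : EuclideanSpace ℝ (Fin d))‖ :=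
            ContinuousLinearMap.le_opNorm _ _
          have h7 : ‖(EuclideanSpace.single i (1 : ℝ) : EuclideanSpace ℝ (Fin d))‖ = 1 := by
            rw [EuclideanSpace.norm_single]; norm_num
          rw [h7, mul_one] at h6
          exact le_trans h5 (le_trans h6 hdb)
        calc |diverg b x| ≤ ∑ i : Fin d, |fderiv ℝ b x (EuclideanSpace.single i 1) i| :=
              Finset.abs_sum_le_sum_abs _ _
          _ ≤ ∑ _i : Fin d, B := Finset.sum_le_sum fun i _ => hterm i
          _ = d * B := by simp [Finset.sum_const, mul_comm]
      calc -(α * diverg b x) ≤ |α * diverg b x| := neg_le_abs _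
        _ = |α| * |diverg b x| := abs_mul _ _
        _ ≤ |α| * (d * B) := mul_le_mul_of_nonneg_left hdiv (abs_nonneg _)
    have hU : Upot V b ε α x ≤ -a * ‖gradient V x‖ ^ 2 + (d / 2) * ‖gradient V x‖ + C := by
      rw [Upot, hC_def]
      linarith
    have hfin : -a * ‖gradient V x‖ ^ 2 + (d / 2) * ‖gradient V x‖ + C ≤ -(1 / Δt) := by
      have hT2 : (d / 2 + C + 1 / Δt) / a ≤ T := hT_def ▸ le_max_right _ _
      have h3 : d / 2 + C + 1 / Δt ≤ T * a := (div_le_iff₀ ha).mp hT2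
      have hΔ : (0 : ℝ) < 1 / Δt := by positivity
      have h4 : (d / 2 + C + 1 / Δt) * ‖gradient V x‖ ≤ T * a * ‖gradient V x‖ := mul_le_mul_of_nonneg_right h3 ht0
      have h5 : T * a * ‖gradient V x‖ ≤ ‖gradient V x‖ * a * ‖gradient V x‖ :=
        mul_le_mul_of_nonneg_right (mul_le_mul_of_nonneg_right hTt ha.le) ht0
      have h6 : C ≤ C * ‖gradient V x‖ := le_mul_of_one_le_right hC ht1
      have h7 : 1 / Δt ≤ (1 / Δt) * ‖gradient V x‖ := le_mul_of_one_le_right hΔ.le ht1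
      nlinarith [h4, h5, h6, h7]
    calc Δt * Upot V b ε α x ≤ Δt * (-(1 / Δt)) :=
          mul_le_mul_of_nonneg_left (le_trans hU hfin) hΔt.le
      _ = -1 := by field_simp
  -- γ
  have hγ0 : (0 : ℝ) < Real.exp (-1) := Real.exp_pos _
  have hγ1 : Real.exp (-1 : ℝ) < 1 := Real.exp_lt_one_iff.mpr (by norm_num)
  -- K via compactness
  have hw : Continuous fun x : EuclideanSpace ℝ (Fin d) => Real.exp (Δt * Upot V b ε α x) :=
    Real.continuous_exp.comp (continuous_const.mul (upot_cont' V b hA.smooth_V hA.smooth_b ε α))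
  obtain ⟨x₀, -, hx₀⟩ := (isCompact_closedBall (0 : EuclideanSpace ℝ (Fin d)) R).exists_isMaxOn
    ⟨0, Metric.mem_closedBall_self hRpos.le⟩ hw.continuousOn
  obtain ⟨K, hK_def⟩ : ∃ K : ℝ, K = max 1 (Real.exp (Δt * Upot V b ε α x₀)) := ⟨_, rfl⟩
  have hK1 : (1 : ℝ) ≤ K := hK_def ▸ le_max_left _ _
  have hball : ∀ x : EuclideanSpace ℝ (Fin d), ‖x‖ ≤ R → Real.exp (Δt * Upot V b ε α x) ≤ K := by
    intro x hxR
    exact le_trans (hx₀ (mem_closedBall_zero_iff.mpr hxR)) (hK_def ▸ le_max_right _ _)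
  have hfarγ : ∀ x : EuclideanSpace ℝ (Fin d), R < ‖x‖ →
      Real.exp (Δt * Upot V b ε α x) ≤ Real.exp (-1) := fun x hx =>
    Real.exp_le_exp.mpr (hfar x hx)
  have hKall : ∀ x : EuclideanSpace ℝ (Fin d), Real.exp (Δt * Upot V b ε α x) ≤ K := by
    intro x
    by_cases h : ‖x‖ ≤ R
    · exact hball x h
    · exact le_trans (hfarγ x (not_le.mp h)) (le_trans (le_of_lt hγ1) hK1)
  refine ⟨Real.exp (-1), ⟨hγ0, hγ1⟩, K, hK1, R, hRpos, hfarγ, hKall, ?_⟩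
  intro x
  by_cases h : ‖x‖ ≤ R
  · have hmem : x ∈ Metric.closedBall (0 : EuclideanSpace ℝ (Fin d)) R :=
      mem_closedBall_zero_iff.mpr h
    rw [Set.indicator_of_mem hmem]
    have := hball x h
    linarith
  · have hmem : x ∉ Metric.closedBall (0 : EuclideanSpace ℝ (Fin d)) R := by
      simpa [mem_closedBall_zero_iff] using h
    rw [Set.indicator_of_notMem hmem]
    have := hfarγ x (not_le.mp h)
    linarith
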